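/- arXiv:2402.15834 — 5 statements merged into one kernel-verified Lean document; each statement's English description precedes it below -/
import Mathlib

section
/- Let G be a finite simple graph, let ℋ be a set (with no repeated elements) of connected non-null subgraphs of G. Then tree-μ(G°[ℋ]) ≤ tree-μ(G). -/
open SimpleGraph

namespace Paper

/-- A tree decomposition of a graph `G`. -/
structure TreeDecomp {V : Type} (G : SimpleGraph V) where
  ι : Type
  fin : Fintype ι
  tree : SimpleGraph ι
  isTree : tree.IsTree
  bag : ι → Set V
  mem_bag : ∀ v : V, ∃ t, v ∈ bag t
  edge_bag : ∀ ⦃u w : V⦄, G.Adj u w → ∃ t, u ∈ bag t ∧ w ∈ bag t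
  coherent : ∀ v : V, (tree.induce {t | v ∈ bag t}).Connected

/-- `M` is an induced matching in `G`: a set of edges, pairwise disjoint,
with no edge of `G` joining endpoints of distinct edges of `M`. -/
def IsInducedMatching {V : Type} (G : SimpleGraph V) (M : Finset (V × V)) : Prop :=
  (∀ p ∈ M, G.Adj p.1 p.2) ∧
    ∀ p ∈ M, ∀ q ∈ M, p ≠ q →
      (p.1 ≠ q.1 ∧ p.1 ≠ q.2 ∧ p.2 ≠ q.1 ∧ p.2 ≠ q.2) ∧
      (¬ G.Adj p.1 q.1 ∧ ¬ G.Adj p.1 q.2 ∧ ¬ G.Adj p.2 q.1 ∧ ¬ G.Adj p.2 q.2)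

/-- Every edge of `M` has an endpoint in `X`. -/
def Touches {V : Type} (M : Finset (V × V)) (X : Set V) : Prop :=
  ∀ p ∈ M, p.1 ∈ X ∨ p.2 ∈ X

/-- μ(𝒯): the maximum size of an induced matching of `G` all of whose edges
touch a common bag of the tree decomposition `D`. -/
noncomputable def mu {V : Type} (G : SimpleGraph V) (D : TreeDecomp G) : ℕ :=
  sSup {n | ∃ (t : D.ι) (M : Finset (V × V)),
    IsInducedMatching G M ∧ Touches M (D.bag t) ∧ M.card = n}

/-- Induced matching treewidth: minimum of μ(𝒯) over tree decompositions. -/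
noncomputable def treeMu {V : Type} (G : SimpleGraph V) : ℕ :=
  sInf {n | ∃ D : TreeDecomp G, mu G D = n}

/-- `S` is an independent set of `G`. -/
def IsIndepSet {V : Type} (G : SimpleGraph V) (S : Finset V) : Prop :=
  ∀ u ∈ S, ∀ v ∈ S, u ≠ v → ¬ G.Adj u v

/-- α(𝒯): the maximum size of an independent set of `G` contained in a bag. -/
noncomputable def alphaTD {V : Type} (G : SimpleGraph V) (D : TreeDecomp G) : ℕ :=
  sSup {n | ∃ (t : D.ι) (S : Finset V),
    IsIndepSet G S ∧ ↑S ⊆ D.bag t ∧ S.card = n}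

/-- Tree-independence number: minimum of α(𝒯) over tree decompositions. -/
noncomputable def treeAlpha {V : Type} (G : SimpleGraph V) : ℕ :=
  sInf {n | ∃ D : TreeDecomp G, alphaTD G D = n}

/-- The `k`-th power of `G`: distinct vertices adjacent iff their distance in `G`
is at most `k` (for `k = 0` this is the edgeless graph). -/
def power {V : Type} (G : SimpleGraph V) (k : ℕ) : SimpleGraph V :=
  SimpleGraph.fromRel (fun u v => G.Reachable u v ∧ G.dist u v ≤ k)

/-- The graph `G°[ℋ]` for a family `ℋ = {H j}` of subgraphs of `G`: vertices are
indices `j`, two distinct indices adjacent iff the subgraphs share a vertex or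
there is an edge of `G` between them. -/
def blowup {V J : Type} (G : SimpleGraph V) (H : J → G.Subgraph) : SimpleGraph J :=
  SimpleGraph.fromRel (fun i j =>
    ((H i).verts ∩ (H j).verts).Nonempty ∨
      ∃ u ∈ (H i).verts, ∃ v ∈ (H j).verts, G.Adj u v)

/-!
Replacing each bag `X` of a tree decomposition of `G` by the set of indices `j` with `H j`
meeting `X` gives a tree decomposition of `G°[ℋ]`: the nodes whose bags meet a connected `H j`
form a subtree. An induced matching of `G°[ℋ]` touching such a bag lifts to one of `G` of the
same size touching `X`: for a matching edge `ij` with `H i` meeting `X` at `x`, pick an edge of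
`G` at `x` inside `H i ∪ H j`. It exists because `H i` is connected, unless `H i` is the single
vertex `x`; then `x` has a neighbour in `H j`, or lies in `H j`, which cannot also be just `{x}`
since the family is injective. Edges picked for distinct matching edges are disjoint and
nonadjacent, because their matching edges are.
-/

lemma _root_.SimpleGraph.Subgraph.Connected.exists_adj_or_eq_singletonSubgraph {V : Type}
    {G : SimpleGraph V} {K : G.Subgraph} (hK : K.Connected) {x : V} (hx : x ∈ K.verts) :
    (∃ y, K.Adj x y) ∨ K = G.singletonSubgraph x := by
  rw [SimpleGraph.eq_singletonSubgraph_iff_verts_eq]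
  by_cases hnt : K.verts.Nontrivial
  · have := hnt.coe_sort
    exact .inl (hK.preconnected.exists_adj_of_nontrivial ⟨x, hx⟩)
  · exact .inr ((Set.not_nontrivial_iff.1 hnt).eq_singleton_of_mem hx)

lemma isInducedMatching_iff {V : Type} {G : SimpleGraph V} {M : Finset (V × V)} :
    IsInducedMatching G M ↔ (∀ p ∈ M, G.Adj p.1 p.2) ∧ ∀ p ∈ M, ∀ q ∈ M, p ≠ q →
      ∀ a ∈ ({p.1, p.2} : Set V), ∀ b ∈ ({q.1, q.2} : Set V), a ≠ b ∧ ¬ G.Adj a b := by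
  simp only [IsInducedMatching, Set.mem_insert_iff, Set.mem_singleton_iff, forall_eq_or_imp,
    forall_eq]
  grind

section Blowup

variable {V J : Type} {G : SimpleGraph V} {H : J → G.Subgraph}

lemma blowup_adj_iff {i j : J} :
    (blowup G H).Adj i j ↔ i ≠ j ∧ (((H i).verts ∩ (H j).verts).Nonempty ∨
      ∃ u ∈ (H i).verts, ∃ v ∈ (H j).verts, G.Adj u v) := by
  rw [blowup, fromRel_adj, Set.inter_comm (H j).verts]
  refine and_congr_right fun _ => ⟨?_, Or.inl⟩
  rintro ((h | h) | h | ⟨u, hu, v, hv, huv⟩)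
  exacts [.inl h, .inr h, .inl h, .inr ⟨v, hv, u, hu, huv.symm⟩]

lemma blowup_adj_of_mem {i j : J} (hij : i ≠ j) {x y : V} (hx : x ∈ (H i).verts)
    (hy : y ∈ (H j).verts) (hxy : x = y ∨ G.Adj x y) : (blowup G H).Adj i j := by
  refine blowup_adj_iff.2 ⟨hij, ?_⟩
  rcases hxy with rfl | hxy
  exacts [.inl ⟨x, hx, hy⟩, .inr ⟨x, hx, y, hy, hxy⟩]

lemma exists_adj_of_blowup_adj (hinj : Function.Injective H) (hconn : ∀ j, (H j).Connected)
    {i j : J} (hij : (blowup G H).Adj i j) {x : V} (hx : x ∈ (H i).verts) :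
    ∃ y, G.Adj x y ∧ (y ∈ (H i).verts ∨ y ∈ (H j).verts) := by
  rcases (hconn i).exists_adj_or_eq_singletonSubgraph hx with ⟨y, hy⟩ | hi
  · exact ⟨y, (H i).adj_sub hy, .inl hy.snd_mem⟩
  have hverts_i : ∀ {v}, v ∈ (H i).verts → v = x := fun hv => by simpa [hi] using hv
  obtain ⟨hne, ⟨v, hvi, hvj⟩ | ⟨u, hu, v, hv, huv⟩⟩ := blowup_adj_iff.1 hij
  · obtain rfl := hverts_i hvi
    rcases (hconn j).exists_adj_or_eq_singletonSubgraph hvj with ⟨y, hy⟩ | hj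
    · exact ⟨y, (H j).adj_sub hy, .inr hy.snd_mem⟩
    · exact absurd (hinj (hi.trans hj.symm)) hne
  · obtain rfl := hverts_i hu
    exact ⟨v, huv, .inr hv⟩

lemma ne_and_not_adj_of_isInducedMatching_blowup {M' : Finset (J × J)}
    (hM' : IsInducedMatching (blowup G H) M') {p q : J × J} (hp : p ∈ M') (hq : q ∈ M')
    (hpq : p ≠ q) {x y : V} (hx : ∃ a ∈ ({p.1, p.2} : Set J), x ∈ (H a).verts)
    (hy : ∃ b ∈ ({q.1, q.2} : Set J), y ∈ (H b).verts) : x ≠ y ∧ ¬ G.Adj x y := by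
  obtain ⟨a, ha, hxa⟩ := hx
  obtain ⟨b, hb, hyb⟩ := hy
  obtain ⟨hab, hnadj⟩ := (isInducedMatching_iff.1 hM').2 p hp q hq hpq a ha b hb
  exact ⟨fun h => hnadj (blowup_adj_of_mem hab hxa hyb (.inl h)),
    fun h => hnadj (blowup_adj_of_mem hab hxa hyb (.inr h))⟩

lemma exists_isInducedMatching_of_blowup (hinj : Function.Injective H)
    (hconn : ∀ j, (H j).Connected) {X : Set V} {M' : Finset (J × J)}
    (hM' : IsInducedMatching (blowup G H) M')
    (htouch : Touches M' {j | ((H j).verts ∩ X).Nonempty}) :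
    ∃ M : Finset (V × V), IsInducedMatching G M ∧ Touches M X ∧ M.card = M'.card := by
  classical
  have hedge : ∀ p ∈ M', ∃ e : V × V, G.Adj e.1 e.2 ∧ e.1 ∈ X ∧
      ∀ z ∈ ({e.1, e.2} : Set V), ∃ a ∈ ({p.1, p.2} : Set J), z ∈ (H a).verts := by
    intro p hp
    obtain ⟨i, j, hij, hpair, x, hx, hxX⟩ : ∃ i j, (blowup G H).Adj i j ∧
        ({i, j} : Set J) = {p.1, p.2} ∧ ((H i).verts ∩ X).Nonempty := by
      rcases htouch p hp with h | h
      exacts [⟨_, _, hM'.1 p hp, rfl, h⟩, ⟨_, _, (hM'.1 p hp).symm, Set.pair_comm _ _, h⟩]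
    obtain ⟨y, hxy, hy⟩ := exists_adj_of_blowup_adj hinj hconn hij hx
    refine ⟨(x, y), hxy, hxX, ?_⟩
    simp only [← hpair, Set.mem_insert_iff, Set.mem_singleton_iff, forall_eq_or_imp, forall_eq,
      exists_eq_or_imp, exists_eq_left]
    tauto
  choose e he using hedge
  let f : M' → V × V := fun p => e p.1 p.2
  have hsep : ∀ p q : M', p ≠ q → ∀ z ∈ ({(f p).1, (f p).2} : Set V),
      ∀ w ∈ ({(f q).1, (f q).2} : Set V), z ≠ w ∧ ¬ G.Adj z w := fun p q hpq z hz w hw =>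
    ne_and_not_adj_of_isInducedMatching_blowup hM' p.2 q.2 (Subtype.coe_ne_coe.2 hpq)
      ((he _ p.2).2.2 z hz) ((he _ q.2).2.2 w hw)
  have hf : Function.Injective f := fun p q hpq => by_contra fun hne =>
    (hsep p q hne _ (.inl rfl) _ (.inl rfl)).1 (congrArg Prod.fst hpq)
  refine ⟨M'.attach.image f, isInducedMatching_iff.2 ⟨?_, ?_⟩, ?_, ?_⟩
  · simp only [Finset.mem_image, Finset.mem_attach, true_and, forall_exists_index]
    rintro _ p rfl
    exact (he _ p.2).1
  · simp only [Finset.mem_image, Finset.mem_attach, true_and, forall_exists_index]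
    rintro _ p rfl _ q rfl hpq
    exact hsep p q (ne_of_apply_ne f hpq)
  · simp only [Touches, Finset.mem_image, Finset.mem_attach, true_and, forall_exists_index]
    rintro _ p rfl
    exact .inl (he _ p.2).2.1
  · rw [Finset.card_image_of_injective _ hf, Finset.card_attach]

end Blowup

namespace TreeDecomp

variable {V J : Type} {G : SimpleGraph V}

def trivial (G : SimpleGraph V) : TreeDecomp G where
  ι := Unit
  fin := inferInstance
  tree := ⊥
  isTree := .of_subsingleton
  bag _ := Set.univ
  mem_bag _ := ⟨(), Set.mem_univ _⟩
  edge_bag _ _ _ := ⟨(), Set.mem_univ _, Set.mem_univ _⟩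
  coherent v := by
    have : Nonempty {_t : Unit | v ∈ Set.univ} := ⟨⟨(), Set.mem_univ v⟩⟩
    exact .of_subsingleton

/-- Adjacent vertices of `K` share a bag, so the connected node sets of its vertices chain
together along walks of `K`. -/
lemma connected_induce_bags_meeting (D : TreeDecomp G) {K : G.Subgraph} (hK : K.Connected) :
    (D.tree.induce {t | (K.verts ∩ D.bag t).Nonempty}).Connected := by
  set S : Set D.ι := {t | (K.verts ∩ D.bag t).Nonempty}
  have hS : ∀ {v t}, v ∈ K.verts → v ∈ D.bag t → t ∈ S := fun hv ht => ⟨_, hv, ht⟩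
  have hbag : ∀ {v : V} (hv : v ∈ K.verts) {t₁ t₂ : D.ι} (h₁ : v ∈ D.bag t₁)
      (h₂ : v ∈ D.bag t₂), (D.tree.induce S).Reachable ⟨t₁, hS hv h₁⟩ ⟨t₂, hS hv h₂⟩ :=
    fun hv _ _ h₁ h₂ => ((D.coherent _).preconnected ⟨_, h₁⟩ ⟨_, h₂⟩).map
      (D.tree.induceHomOfLE fun _ => hS hv).toHom
  have hwalk : ∀ (a b : K.verts) (_ : K.coe.Walk a b) {t₁ t₂ : D.ι} (h₁ : a.1 ∈ D.bag t₁)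
      (h₂ : b.1 ∈ D.bag t₂), (D.tree.induce S).Reachable ⟨t₁, hS a.2 h₁⟩ ⟨t₂, hS b.2 h₂⟩ := by
    intro a b w
    induction w with
    | @nil u => exact hbag u.2
    | @cons u _ _ hadj _ ih =>
      intro t₁ t₂ h₁ h₂
      obtain ⟨t, hu, hc⟩ := D.edge_bag (K.adj_sub hadj)
      exact (hbag u.2 h₁ hu).trans (ih hc h₂)
  obtain ⟨v, hv⟩ := hK.nonempty
  obtain ⟨t, ht⟩ := D.mem_bag v
  have : Nonempty S := ⟨⟨t, hS hv ht⟩⟩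
  refine ⟨fun ⟨t₁, x, hx, h₁⟩ ⟨t₂, y, hy, h₂⟩ => ?_⟩
  obtain ⟨w⟩ := hK ⟨x, hx⟩ ⟨y, hy⟩
  exact hwalk _ _ w h₁ h₂

def toBlowup (D : TreeDecomp G) (H : J → G.Subgraph) (hconn : ∀ j, (H j).Connected) :
    TreeDecomp (blowup G H) where
  ι := D.ι
  fin := D.fin
  tree := D.tree
  isTree := D.isTree
  bag t := {j | ((H j).verts ∩ D.bag t).Nonempty}
  mem_bag j := by
    obtain ⟨v, hv⟩ := (hconn j).nonempty
    obtain ⟨t, ht⟩ := D.mem_bag v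
    exact ⟨t, v, hv, ht⟩
  edge_bag i j hij := by
    obtain ⟨-, ⟨v, hvi, hvj⟩ | ⟨u, hu, v, hv, huv⟩⟩ := blowup_adj_iff.1 hij
    · obtain ⟨t, ht⟩ := D.mem_bag v
      exact ⟨t, ⟨v, hvi, ht⟩, ⟨v, hvj, ht⟩⟩
    · obtain ⟨t, hut, hvt⟩ := D.edge_bag huv
      exact ⟨t, ⟨u, hu, hut⟩, ⟨v, hv, hvt⟩⟩
  coherent j := D.connected_induce_bags_meeting (hconn j)

end TreeDecomp

section Mu

variable {V : Type} {G : SimpleGraph V}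

lemma card_le_mu [Finite V] (D : TreeDecomp G) (t : D.ι) {M : Finset (V × V)}
    (hM : IsInducedMatching G M) (ht : Touches M (D.bag t)) : M.card ≤ mu G D := by
  have := Fintype.ofFinite V
  refine le_csSup ⟨Fintype.card (V × V), ?_⟩ ⟨t, M, hM, ht, rfl⟩
  rintro _ ⟨_, M, -, -, rfl⟩
  exact M.card_le_univ

lemma mu_le {D : TreeDecomp G} {n : ℕ}
    (h : ∀ t M, IsInducedMatching G M → Touches M (D.bag t) → M.card ≤ n) : mu G D ≤ n :=
  csSup_le' <| by
    rintro _ ⟨t, M, hM, ht, rfl⟩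
    exact h t M hM ht

lemma treeMu_le_mu (D : TreeDecomp G) : treeMu G ≤ mu G D :=
  Nat.sInf_le ⟨D, rfl⟩

lemma exists_mu_eq_treeMu (G : SimpleGraph V) : ∃ D : TreeDecomp G, mu G D = treeMu G :=
  Nat.sInf_mem (s := {n | ∃ D : TreeDecomp G, mu G D = n}) ⟨_, .trivial G, rfl⟩

end Mu

theorem stmt0_general {V J : Type} [Fintype V] (G : SimpleGraph V)
    (H : J → G.Subgraph) (hinj : Function.Injective H)
    (hconn : ∀ j, (H j).Connected) :
    treeMu (blowup G H) ≤ treeMu G := by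
  obtain ⟨D, hD⟩ := exists_mu_eq_treeMu G
  refine hD ▸ (treeMu_le_mu (D.toBlowup H hconn)).trans (mu_le fun t M' hM' ht => ?_)
  obtain ⟨M, hM, hMt, hcard⟩ := exists_isInducedMatching_of_blowup hinj hconn hM' ht
  exact hcard ▸ card_le_mu D t hM hMt

/-- if `ℋ` is a set (injective family) of connected non-null
subgraphs of `G`, then tree-μ(G°[ℋ]) ≤ tree-μ(G). -/
theorem stmt0 {V J : Type} [Fintype V] [Fintype J] (G : SimpleGraph V)
    (H : J → G.Subgraph) (hinj : Function.Injective H)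
    (hconn : ∀ j, (H j).Connected) :
    treeMu (blowup G H) ≤ treeMu G :=
  stmt0_general G H hinj hconn

end Paper
end

section
/- Let G be a finite simple graph and let ℋ = {H_j}_{j∈J} be a finite family (possibly with repetitions) of connected subgraphs of G, each having at least two vertices. Then tree-α(G°[ℋ]) ≤ tree-μ(G). -/
open SimpleGraph

namespace Paper

-- auxiliary lemmas
lemma reach_mono {V : Type} (G : SimpleGraph V) {s a : Set V} (h : s ⊆ a)
    {x y : V} (hx : x ∈ s) (hy : y ∈ s)
    (hr : (G.induce s).Reachable ⟨x, hx⟩ ⟨y, hy⟩) :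
    (G.induce a).Reachable ⟨x, h hx⟩ ⟨y, h hy⟩ :=
  hr.map (⟨Set.inclusion h, fun {_ _} hadj => hadj⟩ : G.induce s →g G.induce a)

lemma same_vertex_reach {V : Type} {G : SimpleGraph V} (D : TreeDecomp G) (v : V)
    {A : Set D.ι} (hA : {t | v ∈ D.bag t} ⊆ A) {t1 t2 : D.ι}
    (h1 : v ∈ D.bag t1) (h2 : v ∈ D.bag t2) :
    (D.tree.induce A).Reachable ⟨t1, hA h1⟩ ⟨t2, hA h2⟩ :=
  reach_mono D.tree hA h1 h2 ((D.coherent v).preconnected ⟨t1, h1⟩ ⟨t2, h2⟩)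

lemma coherent_union {V : Type} {G : SimpleGraph V} (D : TreeDecomp G)
    (W : G.Subgraph) (hW : W.Connected) :
    (D.tree.induce {t | (W.verts ∩ D.bag t).Nonempty}).Connected := by
  set A : Set D.ι := {t | (W.verts ∩ D.bag t).Nonempty} with hAdef
  have hsub : ∀ {v : V}, v ∈ W.verts → {t | v ∈ D.bag t} ⊆ A := by
    intro v hv t ht
    exact ⟨v, hv, ht⟩
  have key : ∀ (a b : W.verts) (p : W.coe.Walk a b) (t1 t2 : D.ι)
      (h1 : (a : V) ∈ D.bag t1) (h2 : (b : V) ∈ D.bag t2),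
      (D.tree.induce A).Reachable ⟨t1, hsub a.2 h1⟩ ⟨t2, hsub b.2 h2⟩ := by
    intro a b p
    induction p with
    | nil =>
      intro t1 t2 h1 h2
      exact same_vertex_reach D _ (hsub (by exact_mod_cast (Subtype.coe_prop _))) h1 h2
    | @cons x y z hadj q ih =>
      intro t1 t2 h1 h2
      have hG : G.Adj (x : V) (y : V) := hadj.adj_sub
      obtain ⟨s, hxs, hys⟩ := D.edge_bag hG
      have r1 : (D.tree.induce A).Reachable ⟨t1, hsub x.2 h1⟩ ⟨s, hsub x.2 hxs⟩ :=
        same_vertex_reach D _ (hsub x.2) h1 hxs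
      exact r1.trans (ih s t2 hys h2)
  obtain ⟨v, hv⟩ := hW.nonempty
  obtain ⟨t, ht⟩ := D.mem_bag v
  haveI : Nonempty {x // x ∈ A} := ⟨⟨t, v, hv, ht⟩⟩
  refine ⟨?_⟩
  rintro ⟨t1, ht1⟩ ⟨t2, ht2⟩
  obtain ⟨v1, hv1W, hv1⟩ := ht1
  obtain ⟨v2, hv2W, hv2⟩ := ht2
  obtain ⟨p⟩ := hW.preconnected ⟨v1, hv1W⟩ ⟨v2, hv2W⟩
  exact key _ _ p t1 t2 hv1 hv2

lemma exists_neighbor {V : Type} {G : SimpleGraph V} (W : G.Subgraph) (hW : W.Connected)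
    (htwo : ∃ a b : V, a ∈ W.verts ∧ b ∈ W.verts ∧ a ≠ b) {u : V} (hu : u ∈ W.verts) :
    ∃ w, W.Adj u w := by
  obtain ⟨a, b, ha, hb, hab⟩ := htwo
  obtain ⟨v, hv, hvu⟩ : ∃ v, v ∈ W.verts ∧ v ≠ u := by
    by_cases h : a = u
    · exact ⟨b, hb, fun hbu => hab (h.trans hbu.symm)⟩
    · exact ⟨a, ha, h⟩
  obtain ⟨p⟩ := hW.preconnected ⟨u, hu⟩ ⟨v, hv⟩
  cases p with
  | nil => exact (hvu rfl).elim
  | cons h _ => exact ⟨_, h⟩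

def trivialDecomp {V : Type} (G : SimpleGraph V) : TreeDecomp G where
  ι := Unit
  fin := inferInstance
  tree := ⊥
  isTree := by
    constructor
    · exact ⟨fun u v => by rw [Subsingleton.elim u v]⟩
    · intro v c hc
      cases c with
      | nil => exact hc.ne_nil rfl
      | cons h _ => exact h.elim
  bag := fun _ => Set.univ
  mem_bag := fun v => ⟨(), Set.mem_univ v⟩
  edge_bag := fun u w _ => ⟨(), Set.mem_univ u, Set.mem_univ w⟩
  coherent := by
    intro v
    haveI : Nonempty {t : Unit // t ∈ {t | v ∈ Set.univ}} := ⟨⟨(), Set.mem_univ v⟩⟩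
    exact ⟨fun a b => by rw [Subsingleton.elim a b]⟩

/-- if `ℋ` is a family (possibly with repetitions) of connected
subgraphs of `G`, each with at least two vertices, then tree-α(G°[ℋ]) ≤ tree-μ(G). -/
theorem stmt1 {V J : Type} [Fintype V] [Fintype J] (G : SimpleGraph V)
    (H : J → G.Subgraph)
    (hconn : ∀ j, (H j).Connected)
    (htwo : ∀ j, ∃ u v : V, u ∈ (H j).verts ∧ v ∈ (H j).verts ∧ u ≠ v) :
    treeAlpha (blowup G H) ≤ treeMu G := by
  classical
  have hBadj : ∀ i j : J, (blowup G H).Adj i j ↔ i ≠ j ∧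
      ((((H i).verts ∩ (H j).verts).Nonempty ∨
        ∃ u ∈ (H i).verts, ∃ v ∈ (H j).verts, G.Adj u v) ∨
       (((H j).verts ∩ (H i).verts).Nonempty ∨
        ∃ u ∈ (H j).verts, ∃ v ∈ (H i).verts, G.Adj u v)) :=
    fun i j => SimpleGraph.fromRel_adj _ i j
  have hkey : ∀ D : TreeDecomp G, treeAlpha (blowup G H) ≤ mu G D := by
    intro D
    let D' : TreeDecomp (blowup G H) :=
      { ι := D.ι
        fin := D.fin
        tree := D.tree
        isTree := D.isTree
        bag := fun t => {j | ((H j).verts ∩ D.bag t).Nonempty}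
        mem_bag := by
          intro j
          obtain ⟨a, b, ha, hb, hab⟩ := htwo j
          obtain ⟨t, ht⟩ := D.mem_bag a
          exact ⟨t, a, ha, ht⟩
        edge_bag := by
          intro i j hij
          rw [hBadj] at hij
          obtain ⟨hne, (⟨x, hxi, hxj⟩ | ⟨x, hx, y, hy, hxy⟩) |
                       (⟨x, hxj, hxi⟩ | ⟨x, hx, y, hy, hxy⟩)⟩ := hij
          · obtain ⟨t, ht⟩ := D.mem_bag x
            exact ⟨t, ⟨x, hxi, ht⟩, ⟨x, hxj, ht⟩⟩
          · obtain ⟨t, ht1, ht2⟩ := D.edge_bag hxy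
            exact ⟨t, ⟨x, hx, ht1⟩, ⟨y, hy, ht2⟩⟩
          · obtain ⟨t, ht⟩ := D.mem_bag x
            exact ⟨t, ⟨x, hxi, ht⟩, ⟨x, hxj, ht⟩⟩
          · obtain ⟨t, ht1, ht2⟩ := D.edge_bag hxy
            exact ⟨t, ⟨y, hy, ht2⟩, ⟨x, hx, ht1⟩⟩
        coherent := fun j => coherent_union D (H j) (hconn j) }
    have hbdd : BddAbove {n | ∃ (t : D.ι) (M : Finset (V × V)),
        IsInducedMatching G M ∧ Touches M (D.bag t) ∧ M.card = n} := by
      refine ⟨Fintype.card (V × V), ?_⟩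
      rintro n ⟨t, M, _, _, rfl⟩
      exact le_trans (Finset.card_le_univ M) (le_of_eq Finset.card_univ)
    have h2 : alphaTD (blowup G H) D' ≤ mu G D := by
      apply csSup_le
      · haveI : Nonempty D.ι := D.isTree.isConnected.nonempty
        refine ⟨0, Classical.arbitrary D.ι, ∅, ?_, ?_, rfl⟩
        · intro a ha; exact absurd ha (Finset.notMem_empty a)
        · simp
      rintro n ⟨t, S, hind, hSub, rfl⟩
      -- build an induced matching of size S.card touching D.bag t
      have hstep : ∀ j ∈ S, ∃ u w, (H j).Adj u w ∧ u ∈ D.bag t := by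
        intro j hj
        obtain ⟨x, hxV, hxB⟩ : ((H j).verts ∩ D.bag t).Nonempty := hSub hj
        obtain ⟨w, hw⟩ := exists_neighbor (H j) (hconn j) (htwo j) hxV
        exact ⟨x, w, hw, hxB⟩
      choose u w hadj hbag using hstep
      have hfacts : ∀ i, ∀ hi : i ∈ S, ∀ j, ∀ hj : j ∈ S, i ≠ j →
          (∀ x, x ∈ (H i).verts → x ∈ (H j).verts → False) ∧
          (∀ x, x ∈ (H i).verts → ∀ y, y ∈ (H j).verts → ¬ G.Adj x y) := by
        intro i hi j hj hij
        have hnadj := hind i hi j hj hij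
        constructor
        · intro x hxi hxj
          exact hnadj ((hBadj i j).mpr ⟨hij, Or.inl (Or.inl ⟨x, hxi, hxj⟩)⟩)
        · intro x hx y hy hGxy
          exact hnadj ((hBadj i j).mpr ⟨hij, Or.inl (Or.inr ⟨x, hx, y, hy, hGxy⟩)⟩)
      have hvm : ∀ j (hj : j ∈ S), u j hj ∈ (H j).verts ∧ w j hj ∈ (H j).verts :=
        fun j hj => ⟨(hadj j hj).fst_mem, (hadj j hj).snd_mem⟩
      let f : {x // x ∈ S} → V × V := fun j => (u j.1 j.2, w j.1 j.2)
      have hfinj : Function.Injective f := by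
        rintro ⟨i, hi⟩ ⟨j, hj⟩ hfe
        by_contra hne
        have hij : i ≠ j := fun h => hne (Subtype.ext h)
        have h1 : u i hi = u j hj := congrArg Prod.fst hfe
        refine (hfacts i hi j hj hij).1 (u i hi) (hvm i hi).1 ?_
        rw [h1]; exact (hvm j hj).1
      set M : Finset (V × V) := S.attach.image f with hM
      have hcardM : M.card = S.card := by
        rw [hM, Finset.card_image_of_injective _ hfinj, Finset.card_attach]
      have hmemM : ∀ p ∈ M, ∃ j : {x // x ∈ S}, f j = p := by
        intro p hp
        obtain ⟨j, _, hj2⟩ := Finset.mem_image.mp hp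
        exact ⟨j, hj2⟩
      refine le_csSup hbdd ⟨t, M, ⟨?_, ?_⟩, ?_, hcardM⟩
      · intro p hp
        obtain ⟨⟨j, hj⟩, rfl⟩ := hmemM p hp
        exact (hadj j hj).adj_sub
      · intro p hp q hq hpq
        obtain ⟨⟨i, hi⟩, rfl⟩ := hmemM p hp
        obtain ⟨⟨j, hj⟩, rfl⟩ := hmemM q hq
        have hij : i ≠ j := by
          rintro rfl
          exact hpq (congrArg f (Subtype.ext rfl))
        obtain ⟨hd, he⟩ := hfacts i hi j hj hij
        have hui := (hvm i hi).1; have hwi := (hvm i hi).2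
        have huj := (hvm j hj).1; have hwj := (hvm j hj).2
        refine ⟨⟨?_, ?_, ?_, ?_⟩, ?_, ?_, ?_, ?_⟩
        · intro h; exact hd _ hui ((show u i hi = u j hj from h) ▸ huj)
        · intro h; exact hd _ hui ((show u i hi = w j hj from h) ▸ hwj)
        · intro h; exact hd _ hwi ((show w i hi = u j hj from h) ▸ huj)
        · intro h; exact hd _ hwi ((show w i hi = w j hj from h) ▸ hwj)
        · exact he _ hui _ huj
        · exact he _ hui _ hwj
        · exact he _ hwi _ huj
        · exact he _ hwi _ hwj
      · intro p hp
        obtain ⟨⟨j, hj⟩, rfl⟩ := hmemM p hp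
        exact Or.inl (hbag j hj)
    exact le_trans (Nat.sInf_le ⟨D', rfl⟩) h2
  refine le_csInf ⟨mu G (trivialDecomp G), trivialDecomp G, rfl⟩ ?_
  rintro n ⟨D, rfl⟩
  exact hkey D


end Paper
end

section
/- Let G be a finite simple graph and let k and d be positive integers. For each v ∈ V(G), let H_v be the subgraph of G induced by the set of vertices at distance at most d from v in G, and let ℋ = {H_v}_{v∈V(G)}. Then the graphs G^{k+2d} and (G^k)°[ℋ] are isomorphic; in fact, the identity map on V(G) (identifying v with the index of H_v) is an isomorphism: for all distinct u,v ∈ V(G), u and v are adjacent in G^{k+2d} if and only if u and v are adjacent in (G^k)°[ℋ]. -/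
open SimpleGraph

namespace Paper

/-
The ball of radius `d` around `u` and the ball of radius `d` around `v` meet, or are joined by
an edge of `G^k`, exactly when `u` and `v` are at distance at most `k + 2d`: cutting a shortest
`u`–`v` walk after `d` steps and `d` steps before its end splits it into pieces of lengths at most
`d`, `k`, `d`, and the middle piece is a genuine edge of `G^k` unless the whole walk has length
at most `2d`, in which case the balls share a vertex.
-/

section

variable {V : Type} {G : SimpleGraph V}

theorem reachable_of_edist_le_coe {u v : V} {n : ℕ} (h : G.edist u v ≤ n) : G.Reachable u v :=
  reachable_of_edist_ne_top (ne_top_of_le_ne_top (ENat.natCast_ne_top n) h)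

theorem reachable_and_dist_le_iff_edist_le {u v : V} {n : ℕ} :
    G.Reachable u v ∧ G.dist u v ≤ n ↔ G.edist u v ≤ n := by
  refine ⟨fun ⟨hr, h⟩ => ?_, fun h => ?_⟩
  · rw [← hr.coe_dist_eq_edist]
    exact_mod_cast h
  · have hr := reachable_of_edist_le_coe h
    rw [← hr.coe_dist_eq_edist] at h
    exact ⟨hr, by exact_mod_cast h⟩

theorem power_adj {k : ℕ} {u v : V} : (power G k).Adj u v ↔ u ≠ v ∧ G.edist u v ≤ k := by
  simp only [power, fromRel_adj, reachable_and_dist_le_iff_edist_le, edist_comm (u := v), or_self]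

theorem exists_edist_le_and_edist_le {u v : V} {a b : ℕ} (h : G.edist u v ≤ a + b) :
    ∃ w, G.edist u w ≤ a ∧ G.edist w v ≤ b := by
  have hr : G.Reachable u v := reachable_of_edist_le_coe (n := a + b) (by exact_mod_cast h)
  obtain ⟨p, hp⟩ := hr.exists_walk_length_eq_edist
  have hlen : p.length ≤ a + b := by rw [← hp] at h; exact_mod_cast h
  refine ⟨p.getVert a, (edist_le (p.take a)).trans ?_, (edist_le (p.drop a)).trans ?_⟩
  · rw [Walk.take_length]
    exact_mod_cast min_le_left _ _
  · rw [Walk.drop_length]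
    exact_mod_cast (show p.length - a ≤ b by omega)

theorem edist_le_add_two_mul_iff {k d : ℕ} {u v : V} :
    G.edist u v ≤ ((k + 2 * d : ℕ) : ℕ∞) ↔
      (∃ w, G.edist u w ≤ d ∧ G.edist v w ≤ d) ∨
        ∃ a, G.edist u a ≤ d ∧ ∃ b, G.edist v b ≤ d ∧ a ≠ b ∧ G.edist a b ≤ k := by
  constructor
  · intro h
    by_cases hshort : G.edist u v ≤ d + d
    · obtain ⟨w, huw, hwv⟩ := exists_edist_le_and_edist_le hshort
      exact Or.inl ⟨w, huw, edist_comm.trans_le hwv⟩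
    obtain ⟨a, hua, hav⟩ := exists_edist_le_and_edist_le (a := d) (b := k + d)
      (h.trans_eq (by push_cast; ring))
    obtain ⟨b, hab, hbv⟩ := exists_edist_le_and_edist_le (hav.trans_eq (Nat.cast_add k d))
    refine Or.inr ⟨a, hua, b, edist_comm.trans_le hbv, ?_, hab⟩
    rintro rfl
    exact hshort (G.edist_triangle.trans (add_le_add hua hbv))
  · rintro (⟨w, huw, hvw⟩ | ⟨a, hua, b, hvb, -, hab⟩)
    · calc G.edist u v ≤ G.edist u w + G.edist w v := G.edist_triangle
        _ ≤ d + d := add_le_add huw (edist_comm.trans_le hvw)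
        _ ≤ ((k + 2 * d : ℕ) : ℕ∞) := by exact_mod_cast (show d + d ≤ k + 2 * d by omega)
    · calc G.edist u v ≤ G.edist u b + G.edist b v := G.edist_triangle
        _ ≤ G.edist u a + G.edist a b + G.edist b v := by gcongr; exact G.edist_triangle
        _ ≤ d + k + d := add_le_add (add_le_add hua hab) (edist_comm.trans_le hvb)
        _ = ((k + 2 * d : ℕ) : ℕ∞) := by push_cast; ring

end

theorem stmt2_general {V : Type} (G : SimpleGraph V) (k d : ℕ) :
    power G (k + 2 * d) =
      blowup (power G k)
        (fun v => (⊤ : (power G k).Subgraph).induce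
          {u | G.Reachable v u ∧ G.dist v u ≤ d}) := by
  ext u v
  simp only [blowup, fromRel_adj, power_adj, Subgraph.induce_verts, Set.Nonempty,
    Set.mem_inter_iff, Set.mem_ofPred_eq, reachable_and_dist_le_iff_edist_le,
    ← edist_le_add_two_mul_iff]
  rw [edist_comm (u := v), or_self]

/-- with `H v` the subgraph induced by the ball of radius `d`
around `v`, the graphs `G^(k+2d)` and `(G^k)°[ℋ]` coincide (the identity on
`V(G)` is an isomorphism). -/
theorem stmt2 {V : Type} [Fintype V] (G : SimpleGraph V) (k d : ℕ)
    (hk : 0 < k) (hd : 0 < d) :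
    power G (k + 2 * d) =
      blowup (power G k)
        (fun v => (⊤ : (power G k).Subgraph).induce
          {u | G.Reachable v u ∧ G.dist v u ≤ d}) :=
  stmt2_general G k d

end Paper
end

section
/- Let G be a finite simple graph and let r be a positive odd integer. Then tree-α(G^r) ≤ tree-α(G) and tree-μ(G^r) ≤ tree-μ(G). -/
open SimpleGraph

namespace Paper

/-! ### Auxiliary material -/

section Aux

variable {V : Type} {G : SimpleGraph V}

/-- Prefix of a walk: there is a walk from the start to the `i`-th vertex of length `≤ i`. -/
lemma walk_prefix {x y : V} (p : G.Walk x y) (i : ℕ) :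
    ∃ q : G.Walk x (p.getVert i), q.length ≤ i := by
  induction p generalizing i with
  | nil => exact ⟨(Walk.nil).copy rfl (by simp [Walk.getVert]), by simp⟩
  | @cons u c y h p ih =>
    cases i with
    | zero => exact ⟨(Walk.nil).copy rfl (by simp [Walk.getVert_zero]), by simp⟩
    | succ i =>
      obtain ⟨q, hq⟩ := ih i
      exact ⟨(Walk.cons h q).copy rfl (by rw [Walk.getVert_cons_succ]),
        by simpa using Nat.succ_le_succ hq⟩

/-- Suffix of a walk: there is a walk from the `i`-th vertex to the end of
length `≤ length - i`. -/
lemma walk_suffix {x y : V} (p : G.Walk x y) (i : ℕ) :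
    ∃ q : G.Walk (p.getVert i) y, q.length ≤ p.length - i := by
  induction p generalizing i with
  | nil => exact ⟨(Walk.nil).copy (by simp [Walk.getVert]) rfl, by simp⟩
  | @cons u c y h p ih =>
    cases i with
    | zero =>
      exact ⟨(Walk.cons h p).copy (by simp [Walk.getVert_zero]) rfl, by simp⟩
    | succ i =>
      obtain ⟨q, hq⟩ := ih i
      refine ⟨q.copy (by rw [Walk.getVert_cons_succ]) rfl, ?_⟩
      simp only [Walk.length_copy, Walk.length_cons]
      omega

/-- Adjacency in the power graph in terms of walks. -/
lemma power_adj_s5 {r : ℕ} {x y : V} :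
    (power G r).Adj x y ↔ x ≠ y ∧ ∃ w : G.Walk x y, w.length ≤ r := by
  unfold power
  rw [SimpleGraph.fromRel_adj]
  constructor
  · rintro ⟨hne, h | h⟩
    · obtain ⟨p, hp⟩ := h.1.exists_walk_length_eq_dist
      exact ⟨hne, p, hp ▸ h.2⟩
    · obtain ⟨p, hp⟩ := h.1.exists_walk_length_eq_dist
      refine ⟨hne, p.reverse, ?_⟩
      rw [SimpleGraph.Walk.length_reverse, hp]
      exact h.2
  · rintro ⟨hne, w, hw⟩
    exact ⟨hne, Or.inl ⟨⟨w⟩, le_trans (SimpleGraph.dist_le w) hw⟩⟩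

/-- Monotonicity of reachability in induced subgraphs. -/
lemma reach_mono_s5 {ι : Type} {T : SimpleGraph ι} {A B : Set ι} (hAB : A ⊆ B) {a b : ι}
    (ha : a ∈ A) (hb : b ∈ A)
    (h : (T.induce A).Reachable ⟨a, ha⟩ ⟨b, hb⟩) :
    (T.induce B).Reachable ⟨a, hAB ha⟩ ⟨b, hAB hb⟩ := by
  exact h.map (RelHom.mk (fun x => ⟨x.1, hAB x.2⟩) (fun {x y} hadj => hadj) :
    T.induce A →g T.induce B)

variable (G)

/-- The bags of the tree decomposition for the power graph: balls of radius `k`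
around the original bags. -/
def pbag (k : ℕ) (D : TreeDecomp G) (t : D.ι) : Set V :=
  {v | ∃ u ∈ D.bag t, ∃ w : G.Walk u v, w.length ≤ k}

variable {G}

lemma mem_pbag_of_mem_bag {k : ℕ} {D : TreeDecomp G} {t : D.ι} {v : V}
    (hv : v ∈ D.bag t) : v ∈ pbag G k D t :=
  ⟨v, hv, Walk.nil, by simp⟩

/-- Key chain lemma for coherence: walking from `u` to `v` within distance `k`,
we can move between bags containing `u` and bags containing `v` inside the set of
nodes whose power-bag contains `v`. -/
lemma chain {k : ℕ} {D : TreeDecomp G} (v : V) :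
    ∀ (n : ℕ) (u : V) (w : G.Walk u v), w.length = n → n ≤ k →
      ∀ (t1 : D.ι) (h1 : t1 ∈ {t | v ∈ pbag G k D t}), u ∈ D.bag t1 →
        ∃ (t2 : D.ι) (h2 : t2 ∈ {t | v ∈ pbag G k D t}), v ∈ D.bag t2 ∧
          (D.tree.induce {t | v ∈ pbag G k D t}).Reachable ⟨t1, h1⟩ ⟨t2, h2⟩ := by
  intro n
  induction n with
  | zero =>
    intro u w hw _ t1 h1 hu
    cases w with
    | nil => exact ⟨t1, h1, hu, SimpleGraph.Reachable.refl _⟩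
    | cons h p => simp [Walk.length_cons] at hw
  | succ n ih =>
    intro u w hw hn t1 h1 hu
    cases w with
    | nil => simp [Walk.length_nil] at hw
    | @cons _ c _ h p =>
      have hp : p.length = n := by simpa [Walk.length_cons] using hw
      obtain ⟨t', hut', hct'⟩ := D.edge_bag h
      have h' : t' ∈ {t | v ∈ pbag G k D t} := ⟨c, hct', p, by omega⟩
      -- reach from t1 to t' inside the set, through bags containing u
      have hTu : {t | u ∈ D.bag t} ⊆ {t | v ∈ pbag G k D t} := by
        intro t ht
        exact ⟨u, ht, Walk.cons h p, by omega⟩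
      have hr1 : (D.tree.induce {t | u ∈ D.bag t}).Reachable ⟨t1, hu⟩ ⟨t', hut'⟩ :=
        (D.coherent u).preconnected _ _
      have hr1' := reach_mono_s5 hTu hu hut' hr1
      obtain ⟨t2, h2, hvt2, hr2⟩ := ih c p hp (by omega) t' h' hct'
      exact ⟨t2, h2, hvt2, hr1'.trans hr2⟩

variable (G)

/-- The tree decomposition for the `(2k+1)`-st power of `G` obtained from a tree
decomposition of `G` by enlarging each bag to the ball of radius `k` around it. -/
def powerTD (k : ℕ) (D : TreeDecomp G) : TreeDecomp (power G (2 * k + 1)) where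
  ι := D.ι
  fin := D.fin
  tree := D.tree
  isTree := D.isTree
  bag := pbag G k D
  mem_bag v := by
    obtain ⟨t, ht⟩ := D.mem_bag v
    exact ⟨t, mem_pbag_of_mem_bag ht⟩
  edge_bag := by
    intro x y hxy
    rw [power_adj_s5] at hxy
    obtain ⟨hne, w, hw⟩ := hxy
    have hm : 1 ≤ w.length := by
      cases w with
      | nil => exact absurd rfl hne
      | cons h p => simp [Walk.length_cons]
    set i := min k (w.length - 1) with hi
    have hik : i ≤ k := min_le_left _ _
    have hil : i < w.length := by omega
    have hadj : G.Adj (w.getVert i) (w.getVert (i + 1)) := w.adj_getVert_succ hil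
    obtain ⟨t, hat, hbt⟩ := D.edge_bag hadj
    obtain ⟨q1, hq1⟩ := walk_prefix w i
    obtain ⟨q2, hq2⟩ := walk_suffix w (i + 1)
    refine ⟨t, ⟨w.getVert i, hat, q1.reverse, ?_⟩, ⟨w.getVert (i + 1), hbt, q2, ?_⟩⟩
    · rw [Walk.length_reverse]; omega
    · omega
  coherent := by
    intro v
    have hTv : {t | v ∈ D.bag t} ⊆ {t | v ∈ pbag G k D t} := by
      intro t ht
      exact mem_pbag_of_mem_bag ht
    haveI : Nonempty {t | v ∈ pbag G k D t} := by
      obtain ⟨t, ht⟩ := D.mem_bag v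
      exact ⟨⟨t, mem_pbag_of_mem_bag ht⟩⟩
    refine SimpleGraph.Connected.mk ?_
    rintro ⟨t1, h1⟩ ⟨t2, h2⟩
    obtain ⟨u1, hu1, w1, hw1⟩ := h1
    obtain ⟨u2, hu2, w2, hw2⟩ := h2
    obtain ⟨s1, hs1, hvs1, hr1⟩ := chain v w1.length u1 w1 rfl hw1 t1 ⟨u1, hu1, w1, hw1⟩ hu1
    obtain ⟨s2, hs2, hvs2, hr2⟩ := chain v w2.length u2 w2 rfl hw2 t2 ⟨u2, hu2, w2, hw2⟩ hu2
    have hmid : (D.tree.induce {t | v ∈ D.bag t}).Reachable ⟨s1, hvs1⟩ ⟨s2, hvs2⟩ :=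
      (D.coherent v).preconnected _ _
    have hmid' := reach_mono_s5 hTv hvs1 hvs2 hmid
    exact (hr1.trans hmid').trans hr2.symm

variable {G}

/-- Upper bound on the cardinality sets used for `alphaTD`. -/
lemma alpha_bddAbove [Fintype V] (D : TreeDecomp G) :
    BddAbove {n | ∃ (t : D.ι) (S : Finset V),
      IsIndepSet G S ∧ ↑S ⊆ D.bag t ∧ S.card = n} := by
  refine ⟨Fintype.card V, ?_⟩
  rintro n ⟨t, S, _, _, rfl⟩
  exact S.card_le_univ

lemma mu_bddAbove [Fintype V] (D : TreeDecomp G) :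
    BddAbove {n | ∃ (t : D.ι) (M : Finset (V × V)),
      IsInducedMatching G M ∧ Touches M (D.bag t) ∧ M.card = n} := by
  refine ⟨Fintype.card (V × V), ?_⟩
  rintro n ⟨t, M, _, _, rfl⟩
  exact M.card_le_univ

/-- Transfer of independent sets from power-graph bags to original bags. -/
lemma alphaTD_powerTD_le [Fintype V] (k : ℕ) (D : TreeDecomp G) :
    alphaTD (power G (2 * k + 1)) (powerTD G k D) ≤ alphaTD G D := by
  classical
  have : Nonempty D.ι := D.isTree.1.nonempty
  obtain ⟨t0⟩ := this
  refine csSup_le ⟨0, t0, ∅, ?_, by simp, by simp⟩ ?_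
  · intro u hu; simp at hu
  rintro n ⟨t, S, hind, hsub, rfl⟩
  -- the bag of `powerTD` at `t` is `pbag G k D t`
  have hsub' : ∀ s ∈ S, s ∈ pbag G k D t := fun s hs => hsub hs
  have hex : ∀ s : V, ∃ u : V, s ∈ S →
      u ∈ D.bag t ∧ ∃ w : G.Walk u s, w.length ≤ k := by
    intro s
    by_cases hs : s ∈ S
    · obtain ⟨u, hu, w, hw⟩ := hsub' s hs
      exact ⟨u, fun _ => ⟨hu, w, hw⟩⟩
    · exact ⟨s, fun hs' => absurd hs' hs⟩
  choose g hgspec' using hex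
  have hgspec : ∀ s ∈ S, g s ∈ D.bag t ∧ ∃ w : G.Walk (g s) s, w.length ≤ k :=
    fun s hs => hgspec' s hs
  have key : ∀ s ∈ S, ∀ s' ∈ S, s ≠ s' → g s ≠ g s' ∧ ¬ G.Adj (g s) (g s') := by
    intro s hs s' hs' hne
    obtain ⟨hgs, ws, hws⟩ := hgspec s hs
    obtain ⟨hgs', ws', hws'⟩ := hgspec s' hs'
    have hnadj := hind s hs s' hs' hne
    constructor
    · intro heq
      have walk : ∃ w : G.Walk s s', w.length ≤ 2 * k + 1 := by
        refine ⟨ws.reverse.append (ws'.copy heq.symm rfl), ?_⟩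
        rw [Walk.length_append, Walk.length_reverse, Walk.length_copy]
        omega
      exact hnadj (power_adj_s5.mpr ⟨hne, walk⟩)
    · intro hadj
      have walk : ∃ w : G.Walk s s', w.length ≤ 2 * k + 1 := by
        refine ⟨ws.reverse.append (Walk.cons hadj ws'), ?_⟩
        rw [Walk.length_append, Walk.length_reverse, Walk.length_cons]
        omega
      exact hnadj (power_adj_s5.mpr ⟨hne, walk⟩)
  have hinjOn : Set.InjOn g ↑S := by
    intro s hs s' hs' heq
    by_contra hne
    exact (key s hs s' hs' hne).1 heq
  refine le_csSup (alpha_bddAbove D) ⟨t, S.image g, ?_, ?_, ?_⟩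
  · intro a ha b hb hab hadj
    obtain ⟨s, hs, rfl⟩ := Finset.mem_image.mp ha
    obtain ⟨s', hs', rfl⟩ := Finset.mem_image.mp hb
    have hne : s ≠ s' := fun h => hab (by rw [h])
    exact (key s hs s' hs' hne).2 hadj
  · intro a ha
    obtain ⟨s, hs, rfl⟩ := Finset.mem_image.mp ha
    exact (hgspec s hs).1
  · exact Finset.card_image_of_injOn hinjOn

/-- From a power-graph edge touching a ball-bag, extract a `G`-edge touching the
original bag, with both endpoints near an endpoint of the original edge. -/
lemma key_edge {k : ℕ} {D : TreeDecomp G} {t : D.ι} {x y : V}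
    (h : (power G (2 * k + 1)).Adj x y) (hx : x ∈ pbag G k D t) :
    ∃ a b : V, G.Adj a b ∧ a ∈ D.bag t ∧
      (∃ z, (z = x ∨ z = y) ∧ ∃ w : G.Walk z a, w.length ≤ k) ∧
      (∃ z, (z = x ∨ z = y) ∧ ∃ w : G.Walk z b, w.length ≤ k) := by
  obtain ⟨hne, wxy, hwxy⟩ := power_adj_s5.mp h
  obtain ⟨u, hu, wu, hwu⟩ := hx
  have hm : 1 ≤ wxy.length := by
    cases wxy with
    | nil => exact absurd rfl hne
    | cons h p => simp [Walk.length_cons]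
  cases wu with
  | nil =>
    -- here `u = x`, so `x ∈ D.bag t`
    have hadj : G.Adj x (wxy.getVert 1) := by
      have := wxy.adj_getVert_succ (by omega : 0 < wxy.length)
      rwa [Walk.getVert_zero] at this
    by_cases hk : 1 ≤ k
    · obtain ⟨q, hq⟩ := walk_prefix wxy 1
      exact ⟨x, wxy.getVert 1, hadj, hu, ⟨x, Or.inl rfl, Walk.nil, by simp⟩,
        ⟨x, Or.inl rfl, q, le_trans hq hk⟩⟩
    · -- k = 0, so wxy.length = 1 and getVert 1 = y
      have hk0 : k = 0 := by omega
      have hlen : wxy.length = 1 := by omega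
      have hy : wxy.getVert 1 = y := by
        rw [← hlen]; exact wxy.getVert_length
      exact ⟨x, wxy.getVert 1, hadj, hu, ⟨x, Or.inl rfl, Walk.nil, by simp⟩,
        ⟨y, Or.inr rfl, (Walk.nil).copy rfl hy.symm, by simp⟩⟩
  | @cons _ c _ h' p' =>
    refine ⟨u, c, h', hu, ⟨x, Or.inl rfl, (Walk.cons h' p').reverse, ?_⟩,
      ⟨x, Or.inl rfl, p'.reverse, ?_⟩⟩
    · rw [Walk.length_reverse]; exact hwu
    · rw [Walk.length_reverse]
      simp only [Walk.length_cons] at hwu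
      omega

/-- Transfer of induced matchings from power-graph bags to original bags. -/
lemma muTD_powerTD_le [Fintype V] (k : ℕ) (D : TreeDecomp G) :
    mu (power G (2 * k + 1)) (powerTD G k D) ≤ mu G D := by
  classical
  have : Nonempty D.ι := D.isTree.1.nonempty
  obtain ⟨t0⟩ := this
  refine csSup_le ⟨0, t0, ∅, ⟨?_, ?_⟩, ?_, by simp⟩ ?_
  · intro p hp; simp at hp
  · intro p hp; simp at hp
  · intro p hp; simp at hp
  rintro n ⟨t, M, hM, htou, rfl⟩
  have exgood : ∀ p : V × V, ∃ e : V × V, p ∈ M →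
      G.Adj e.1 e.2 ∧ e.1 ∈ D.bag t ∧
      (∃ z, (z = p.1 ∨ z = p.2) ∧ ∃ w : G.Walk z e.1, w.length ≤ k) ∧
      (∃ z, (z = p.1 ∨ z = p.2) ∧ ∃ w : G.Walk z e.2, w.length ≤ k) := by
    intro p
    by_cases hp : p ∈ M
    · have hadj : (power G (2 * k + 1)).Adj p.1 p.2 := hM.1 p hp
      have htouch := htou p hp
      rcases htouch with hx | hx
      · obtain ⟨a, b, h1, h2, h3, h4⟩ := key_edge hadj hx
        exact ⟨(a, b), fun _ => ⟨h1, h2, h3, h4⟩⟩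
      · obtain ⟨a, b, h1, h2, h3, h4⟩ := key_edge hadj.symm hx
        refine ⟨(a, b), fun _ => ⟨h1, h2, ?_, ?_⟩⟩
        · obtain ⟨z, hz, hw⟩ := h3; exact ⟨z, hz.symm, hw⟩
        · obtain ⟨z, hz, hw⟩ := h4; exact ⟨z, hz.symm, hw⟩
    · exact ⟨p, fun hp' => absurd hp' hp⟩
  choose F hF using exgood
  -- key cross property
  have cross : ∀ p ∈ M, ∀ q ∈ M, p ≠ q → ∀ c c',
      (c = (F p).1 ∨ c = (F p).2) → (c' = (F q).1 ∨ c' = (F q).2) →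
      c ≠ c' ∧ ¬ G.Adj c c' := by
    intro p hp q hq hpq c c' hc hc'
    obtain ⟨-, -, hnear1, hnear2⟩ := hF p hp
    obtain ⟨-, -, hnear1', hnear2'⟩ := hF q hq
    have hnc : ∃ z, (z = p.1 ∨ z = p.2) ∧ ∃ w : G.Walk z c, w.length ≤ k := by
      rcases hc with rfl | rfl
      exacts [hnear1, hnear2]
    have hnc' : ∃ z, (z = q.1 ∨ z = q.2) ∧ ∃ w : G.Walk z c', w.length ≤ k := by
      rcases hc' with rfl | rfl
      exacts [hnear1', hnear2']
    obtain ⟨z, hz, wc, hwc⟩ := hnc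
    obtain ⟨z', hz', wc', hwc'⟩ := hnc'
    obtain ⟨⟨d11, d12, d21, d22⟩, ⟨a11, a12, a21, a22⟩⟩ := hM.2 p hp q hq hpq
    have hzz : z ≠ z' ∧ ¬ (power G (2 * k + 1)).Adj z z' := by
      rcases hz with rfl | rfl <;> rcases hz' with rfl | rfl
      exacts [⟨d11, a11⟩, ⟨d12, a12⟩, ⟨d21, a21⟩, ⟨d22, a22⟩]
    constructor
    · intro heq
      have walk : ∃ w : G.Walk z z', w.length ≤ 2 * k + 1 := by
        refine ⟨wc.append (wc'.reverse.copy heq.symm rfl), ?_⟩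
        rw [Walk.length_append, Walk.length_copy, Walk.length_reverse]
        omega
      exact hzz.2 (power_adj_s5.mpr ⟨hzz.1, walk⟩)
    · intro hadj
      have walk : ∃ w : G.Walk z z', w.length ≤ 2 * k + 1 := by
        refine ⟨wc.append (Walk.cons hadj wc'.reverse), ?_⟩
        rw [Walk.length_append, Walk.length_cons, Walk.length_reverse]
        omega
      exact hzz.2 (power_adj_s5.mpr ⟨hzz.1, walk⟩)
  have hinjOn : Set.InjOn F ↑M := by
    intro p hp q hq heq
    by_contra hne
    exact (cross p hp q hq hne (F p).1 (F q).1 (Or.inl rfl) (Or.inl rfl)).1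
      (by rw [heq])
  refine le_csSup (mu_bddAbove D) ⟨t, M.image F, ⟨?_, ?_⟩, ?_, ?_⟩
  · rintro e he
    obtain ⟨p, hp, rfl⟩ := Finset.mem_image.mp he
    exact (hF p hp).1
  · rintro e he e' he' hee
    obtain ⟨p, hp, rfl⟩ := Finset.mem_image.mp he
    obtain ⟨q, hq, rfl⟩ := Finset.mem_image.mp he'
    have hpq : p ≠ q := fun h => hee (by rw [h])
    refine ⟨⟨?_, ?_, ?_, ?_⟩, ?_, ?_, ?_, ?_⟩
    · exact (cross p hp q hq hpq _ _ (Or.inl rfl) (Or.inl rfl)).1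
    · exact (cross p hp q hq hpq _ _ (Or.inl rfl) (Or.inr rfl)).1
    · exact (cross p hp q hq hpq _ _ (Or.inr rfl) (Or.inl rfl)).1
    · exact (cross p hp q hq hpq _ _ (Or.inr rfl) (Or.inr rfl)).1
    · exact (cross p hp q hq hpq _ _ (Or.inl rfl) (Or.inl rfl)).2
    · exact (cross p hp q hq hpq _ _ (Or.inl rfl) (Or.inr rfl)).2
    · exact (cross p hp q hq hpq _ _ (Or.inr rfl) (Or.inl rfl)).2
    · exact (cross p hp q hq hpq _ _ (Or.inr rfl) (Or.inr rfl)).2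
  · rintro e he
    obtain ⟨p, hp, rfl⟩ := Finset.mem_image.mp he
    exact Or.inl (hF p hp).2.1
  · exact Finset.card_image_of_injOn hinjOn

/-- The trivial one-bag tree decomposition. -/
def trivTD (G : SimpleGraph V) : TreeDecomp G where
  ι := Unit
  fin := inferInstance
  tree := ⊥
  isTree := by
    constructor
    · exact SimpleGraph.Connected.mk fun a b => by
        rw [Subsingleton.elim a b]
    · intro v c hc
      cases c with
      | nil => exact hc.ne_nil rfl
      | cons h p => exact h.elim
  bag _ := Set.univ
  mem_bag v := ⟨(), trivial⟩
  edge_bag u w _ := ⟨(), trivial, trivial⟩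
  coherent v := by
    haveI : Nonempty {t : Unit | v ∈ Set.univ} := ⟨⟨(), trivial⟩⟩
    exact SimpleGraph.Connected.mk fun a b => by rw [Subsingleton.elim a b]

end Aux

/-- for odd positive `r`, tree-α(G^r) ≤ tree-α(G) and
tree-μ(G^r) ≤ tree-μ(G). -/
theorem stmt5 {V : Type} [Fintype V] (G : SimpleGraph V) (r : ℕ)
    (hr : 0 < r) (hodd : Odd r) :
    treeAlpha (power G r) ≤ treeAlpha G ∧ treeMu (power G r) ≤ treeMu G := by
  obtain ⟨k, hk⟩ := hodd
  have hk' : r = 2 * k + 1 := by omega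
  subst hk'
  constructor
  · have hne : Set.Nonempty {n | ∃ D : TreeDecomp G, alphaTD G D = n} :=
      ⟨_, trivTD G, rfl⟩
    obtain ⟨D, hD⟩ := Nat.sInf_mem hne
    calc treeAlpha (power G (2 * k + 1))
        ≤ alphaTD (power G (2 * k + 1)) (powerTD G k D) := Nat.sInf_le ⟨_, rfl⟩
      _ ≤ alphaTD G D := alphaTD_powerTD_le k D
      _ = treeAlpha G := hD
  · have hne : Set.Nonempty {n | ∃ D : TreeDecomp G, mu G D = n} :=
      ⟨_, trivTD G, rfl⟩
    obtain ⟨D, hD⟩ := Nat.sInf_mem hne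
    calc treeMu (power G (2 * k + 1))
        ≤ mu (power G (2 * k + 1)) (powerTD G k D) := Nat.sInf_le ⟨_, rfl⟩
      _ ≤ mu G D := muTD_powerTD_le k D
      _ = treeMu G := hD

end Paper
end

section
/- Let r be an even positive integer. For every finite simple graph H, there exists a finite simple chordal graph G such that G^r contains an induced subgraph isomorphic to H. -/
/-!
Write `r = 2 (s + 1)`. Let `G` be a clique on the unordered pairs of vertices of `H`, together with,
for every vertex `w` of `H`, a path `(w, 0) - ⋯ - (w, s)` whose top `(w, s)` is joined to the clique
vertices that are edges of `H` at `w`. Ranking vertices by height (`i` for `(w, i)`, `s + 1` on the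
clique), the neighbours of any vertex at least as high as itself form a clique, so the lowest vertex
of an induced cycle of length `≥ 4` cannot exist: `G` is chordal.

The bottoms `(w, 0)` induce `H` in `G ^ r`: for `uv ∈ E(H)` climb the path of `u`, cross
`s(u, v)` and descend the path of `v`, in `r` steps. If `uv ∉ E(H)`, no clique vertex sees both
tops, and a potential that is `1`-Lipschitz along edges shows that every walk needs `r + 1` steps.
-/

open SimpleGraph

namespace Paper

/-- A graph is chordal iff it has no induced cycle of length at least 4. -/
def Chordal {V : Type} (G : SimpleGraph V) : Prop :=
  ∀ n : ℕ, 4 ≤ n → IsEmpty (SimpleGraph.cycleGraph n ↪g G)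

section Chordality

variable {V : Type} {G : SimpleGraph V}

open Fin.CommRing in
lemma cycleGraph_sub_one_ne_add_one {m : ℕ} (i : Fin (m + 4)) : i - 1 ≠ i + 1 := by
  intro h
  have h2 : (2 : Fin (m + 4)) = 0 := by linear_combination h.symm
  simp [Fin.ext_iff, Nat.mod_eq_of_lt (show 2 < m + 4 by omega)] at h2

open Fin.CommRing in
lemma cycleGraph_not_adj_sub_one_add_one {m : ℕ} (i : Fin (m + 4)) :
    ¬ (cycleGraph (m + 4)).Adj (i - 1) (i + 1) := by
  rw [cycleGraph_adj]
  rintro (h | h)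
  · have h3 : (3 : Fin (m + 4)) = 0 := by linear_combination -h
    simp [Fin.ext_iff, Nat.mod_eq_of_lt (show 3 < m + 4 by omega)] at h3
  · have h1 : (1 : Fin (m + 4)) = 0 := by linear_combination h
    simp at h1

theorem chordal_of_forall_adj_of_le {α : Type*} [LinearOrder α] (f : V → α)
    (hf : ∀ ⦃v a b⦄, G.Adj v a → G.Adj v b → f v ≤ f a → f v ≤ f b → a ≠ b → G.Adj a b) :
    Chordal G := by
  intro n hn
  obtain ⟨m, rfl⟩ : ∃ m, n = m + 4 := ⟨n - 4, by omega⟩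
  refine ⟨fun c => ?_⟩
  obtain ⟨i, hi⟩ := Finite.exists_min (f ∘ c)
  have hprev : G.Adj (c i) (c (i - 1)) := c.map_rel_iff.mpr (by simp [cycleGraph_adj])
  have hnext : G.Adj (c i) (c (i + 1)) := c.map_rel_iff.mpr (by simp [cycleGraph_adj])
  exact cycleGraph_not_adj_sub_one_add_one i <| c.map_rel_iff.mp <|
    hf hprev hnext (hi _) (hi _) (c.injective.ne (cycleGraph_sub_one_ne_add_one i))

end Chordality

section Distance

variable {V : Type} {G : SimpleGraph V}

lemma power_adj_iff {k : ℕ} {a b : V} :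
    (power G k).Adj a b ↔ a ≠ b ∧ G.Reachable a b ∧ G.dist a b ≤ k := by
  rw [power, fromRel_adj, dist_comm (u := b), reachable_comm (u := b), or_self]

lemma Walk.apply_le_apply_add_length {φ : V → ℕ} (hφ : ∀ ⦃x y⦄, G.Adj x y → φ x ≤ φ y + 1)
    {a b : V} (p : G.Walk a b) : φ a ≤ φ b + p.length := by
  induction p with
  | nil => simp
  | cons h _ ih =>
    rw [Walk.length_cons]
    have := hφ h
    omega

lemma Reachable.apply_le_apply_add_dist {φ : V → ℕ} (hφ : ∀ ⦃x y⦄, G.Adj x y → φ x ≤ φ y + 1)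
    {a b : V} (h : G.Reachable a b) : φ a ≤ φ b + G.dist a b := by
  obtain ⟨p, hp⟩ := h.exists_walk_length_eq_dist
  exact hp ▸ Walk.apply_le_apply_add_length hφ p

end Distance

section CliqueWithTails

variable {W : Type} (H : SimpleGraph W) (s : ℕ)

def cliqueWithTails : SimpleGraph ((W × Fin (s + 1)) ⊕ Sym2 W) where
  Adj
    | .inl (u, i), .inl (w, j) => u = w ∧ (pathGraph (s + 1)).Adj i j
    | .inl (u, i), .inr e | .inr e, .inl (u, i) => i = Fin.last s ∧ u ∈ e ∧ e ∈ H.edgeSet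
    | .inr e, .inr e' => e ≠ e'
  symm := ⟨by
    rintro (⟨u, i⟩ | e) (⟨w, j⟩ | e') h
    · exact ⟨h.1.symm, h.2.symm⟩
    all_goals first | exact h | exact Ne.symm h⟩
  loopless := ⟨by
    rintro (⟨u, i⟩ | e) h
    · exact h.2.ne rfl
    · exact (h : e ≠ e) rfl⟩

variable {H s}

def cliqueWithTails.height : (W × Fin (s + 1)) ⊕ Sym2 W → ℕ
  | .inl (_, i) => i
  | .inr _ => s + 1

variable (H s) in
theorem cliqueWithTails_chordal : Chordal (cliqueWithTails H s) := by
  refine chordal_of_forall_adj_of_le cliqueWithTails.height ?_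
  rintro (⟨w, i⟩ | e) (⟨wa, ia⟩ | ea) (⟨wb, ib⟩ | eb) hva hvb hfa hfb hab <;>
    simp only [cliqueWithTails, cliqueWithTails.height, pathGraph_adj, Fin.ext_iff, Fin.val_last,
      ne_eq, Sum.inl.injEq, Prod.mk.injEq, not_and] at * <;> grind

lemma exists_cliqueWithTails_tail_walk (u : W) (i : Fin (s + 1)) :
    ∃ p : (cliqueWithTails H s).Walk (.inl (u, 0)) (.inl (u, i)), p.length = i := by
  induction i using Fin.induction with
  | zero => exact ⟨.nil, rfl⟩
  | succ i ih =>
    obtain ⟨p, hp⟩ := ih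
    have hadj : (cliqueWithTails H s).Adj (.inl (u, i.castSucc)) (.inl (u, i.succ)) :=
      ⟨rfl, by simp [pathGraph_adj]⟩
    exact ⟨p.concat hadj, by simp [hp]⟩

lemma exists_cliqueWithTails_walk_of_adj {u v : W} (huv : H.Adj u v) :
    ∃ p : (cliqueWithTails H s).Walk (.inl (u, 0)) (.inl (v, 0)), p.length = 2 * (s + 1) := by
  obtain ⟨pu, hpu⟩ := exists_cliqueWithTails_tail_walk (H := H) u (Fin.last s)
  obtain ⟨pv, hpv⟩ := exists_cliqueWithTails_tail_walk (H := H) v (Fin.last s)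
  have hu : (cliqueWithTails H s).Adj (.inl (u, Fin.last s)) (.inr s(u, v)) :=
    ⟨rfl, Sym2.mem_mk_left u v, huv⟩
  have hv : (cliqueWithTails H s).Adj (.inr s(u, v)) (.inl (v, Fin.last s)) :=
    ⟨rfl, Sym2.mem_mk_right u v, huv⟩
  refine ⟨pu.append (.cons hu (.cons hv pv.reverse)), ?_⟩
  simp only [Walk.length_append, Walk.length_cons, Walk.length_reverse, hpu, hpv, Fin.val_last]
  ring

variable (H s) in
open Classical in
/-- For distinct non-adjacent `u v`, a lower bound for the distance to `(v, 0)`, equal to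
`2 * (s + 1) + 1` at `(u, 0)`. -/
noncomputable def separatingPotential (u v : W) : (W × Fin (s + 1)) ⊕ Sym2 W → ℕ
  | .inl (w, i) => if w = v then i else if w = u then 2 * s + 3 - i else 2 * s + 2 - i
  | .inr e => if v ∈ e ∧ e ∈ H.edgeSet then s + 1 else s + 2

lemma separatingPotential_le_add_one {u v : W} (huv : u ≠ v) (hnadj : ¬ H.Adj u v)
    ⦃x y : (W × Fin (s + 1)) ⊕ Sym2 W⦄ (h : (cliqueWithTails H s).Adj x y) :
    separatingPotential H s u v x ≤ separatingPotential H s u v y + 1 := by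
  have hsep : ∀ e : Sym2 W, u ∈ e → v ∈ e → e ∉ H.edgeSet := fun e hu hv he =>
    hnadj (by rwa [(Sym2.mem_and_mem_iff huv).mp ⟨hu, hv⟩] at he)
  rcases x with ⟨w, i⟩ | e <;> rcases y with ⟨w', j⟩ | e' <;>
    simp only [cliqueWithTails, separatingPotential, pathGraph_adj, Fin.ext_iff, Fin.val_last]
      at h ⊢ <;> split_ifs <;> grind

lemma adj_of_cliqueWithTails_dist_le {u v : W} (huv : u ≠ v)
    (h : (cliqueWithTails H s).Reachable (.inl (u, 0)) (.inl (v, 0)))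
    (hdist : (cliqueWithTails H s).dist (.inl (u, 0)) (.inl (v, 0)) ≤ 2 * (s + 1)) :
    H.Adj u v := by
  by_contra hnadj
  have := Reachable.apply_le_apply_add_dist (separatingPotential_le_add_one huv hnadj) h
  simp [separatingPotential, huv] at this
  omega

lemma cliqueWithTails_power_adj_iff {u v : W} :
    (power (cliqueWithTails H s) (2 * (s + 1))).Adj (.inl (u, 0)) (.inl (v, 0)) ↔ H.Adj u v := by
  rw [power_adj_iff]
  refine ⟨fun ⟨hne, h, hdist⟩ =>
    adj_of_cliqueWithTails_dist_le (by rintro rfl; exact hne rfl) h hdist, fun huv => ?_⟩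
  obtain ⟨p, hp⟩ := exists_cliqueWithTails_walk_of_adj (s := s) huv
  exact ⟨fun h => huv.ne (by simpa using h), p.reachable, hp ▸ dist_le p⟩

end CliqueWithTails

/-- for even positive `r`, every finite graph `H` appears as an
induced subgraph of the `r`-th power of some finite chordal graph `G`. -/
theorem stmt8 (r : ℕ) (hr : 0 < r) (heven : Even r)
    {W : Type} [Fintype W] (H : SimpleGraph W) :
    ∃ (U : Type) (_ : Fintype U) (G : SimpleGraph U),
      Chordal G ∧ Nonempty (H ↪g power G r) := by
  obtain ⟨s, rfl⟩ : ∃ s, r = 2 * (s + 1) := by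
    obtain ⟨k, rfl⟩ := heven
    exact ⟨k - 1, by omega⟩
  classical
  refine ⟨_, inferInstance, cliqueWithTails H s, cliqueWithTails_chordal H s, ⟨?_⟩⟩
  exact ⟨⟨fun w => .inl (w, 0), fun a b h => by simpa using h⟩, cliqueWithTails_power_adj_iff⟩

end Paper
end
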